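/- arXiv:2108.04422 — 7 statements merged into one kernel-verified Lean document; each statement's English description precedes it below -/
import Mathlib

section
/- (Theorem 1: Noadd is D-competitive on increasing trees) For every MLAPD instance of depth D whose tree is increasing, i.e. c(par v) ≤ c(v) for every node v, the cost of the schedule produced by the Noadd algorithm is at most D times the cost of every feasible schedule of the instance. -/
open Classical

variable {V : Type} [Fintype V] [DecidableEq V] {Req : Type} [Fintype Req]

/-- The root path of `v`: the set of nodes of the form `par^[n] v`, i.e. `v` and its ancestors. -/
noncomputable def rootPath (par : V → V) (v : V) : Finset V :=
  Finset.univ.filter (fun u => ∃ n : ℕ, par^[n] v = u)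

/-- The level of a node: the cardinality of its root path (the root has level 1). -/
noncomputable def level (par : V → V) (v : V) : ℕ :=
  (rootPath par v).card

/-- The depth `D` of the instance: the maximum level over all nodes. -/
noncomputable def depth (par : V → V) : ℕ :=
  Finset.univ.sup (level par)

/-- A valid service tree: contains the root and is closed under the parent map. -/
def IsServiceTree (r : V) (par : V → V) (S : Finset V) : Prop :=
  r ∈ S ∧ ∀ u ∈ S, par u ∈ S

/-- A service `(S, t)` satisfies a request `ρ` if the node of `ρ` lies in `S`
and `t` lies in the time window `[arr ρ, dl ρ]`. -/
def SatisfiedBy (node : Req → V) (arr dl : Req → ℝ) (S : Finset V) (t : ℝ) (ρ : Req) : Prop :=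
  node ρ ∈ S ∧ arr ρ ≤ t ∧ t ≤ dl ρ

/-- The cost of a service subtree. -/
noncomputable def serviceCost (c : V → ℝ) (S : Finset V) : ℝ :=
  ∑ u ∈ S, c u

/-- The cost of a schedule: the sum of the costs of its services. -/
noncomputable def scheduleCost (c : V → ℝ) (sched : List (Finset V × ℝ)) : ℝ :=
  (sched.map fun s => serviceCost c s.1).sum

/-- A schedule is feasible if each of its members is a valid service and every
request is satisfied by some service of the schedule. -/
def Feasible (r : V) (par : V → V) (node : Req → V) (arr dl : Req → ℝ)
    (sched : List (Finset V × ℝ)) : Prop :=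
  (∀ s ∈ sched, IsServiceTree r par s.1) ∧
  ∀ ρ : Req, ∃ s ∈ sched, SatisfiedBy node arr dl s.1 s.2 ρ

/-- The list of all requests, sorted in increasing order of deadline. -/
noncomputable def sortedReqs (dl : Req → ℝ) : List Req :=
  (Finset.univ : Finset Req).toList.mergeSort (fun a b => decide (dl a ≤ dl b))

/-- The Noadd algorithm, processing requests in increasing deadline order:
when the deadline of a request `ρ` not satisfied by any earlier Noadd service is reached,
transmit the service `(P(v(ρ)), d(ρ))`. -/
noncomputable def noaddAux (par : V → V) (node : Req → V) (arr dl : Req → ℝ) :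
    List Req → List (Finset V × ℝ) → List (Finset V × ℝ)
  | [], acc => acc
  | ρ :: rest, acc =>
    if ∃ s ∈ acc, SatisfiedBy node arr dl s.1 s.2 ρ then
      noaddAux par node arr dl rest acc
    else
      noaddAux par node arr dl rest (acc ++ [(rootPath par (node ρ), dl ρ)])

/-- The schedule produced by the Noadd algorithm. -/
noncomputable def noadd (par : V → V) (node : Req → V) (arr dl : Req → ℝ) :
    List (Finset V × ℝ) :=
  noaddAux par node arr dl (sortedReqs dl) []

/-!
Each service `(P(v(ρ)), d(ρ))` sent by Noadd costs at most `D · c(v(ρ))`, because costs decrease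
along the root path. Two requests triggering Noadd services at the same node have disjoint time
windows: otherwise the service of the earlier one would have satisfied the later one. Hence a
single service of any feasible schedule satisfies at most one triggering request per node, and
charging every triggering request to a service satisfying it gives `∑ c(v(ρ)) ≤ cost(OPT)`.
-/

omit [DecidableEq V] in
theorem mem_rootPath_self (par : V → V) (v : V) : v ∈ rootPath par v :=
  Finset.mem_filter.mpr ⟨Finset.mem_univ _, 0, rfl⟩

omit [DecidableEq V] in
theorem cost_le_of_mem_rootPath {par : V → V} {c : V → ℝ} (hinc : ∀ v, c (par v) ≤ c v)
    {u v : V} (hu : u ∈ rootPath par v) : c u ≤ c v := by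
  have hiter : ∀ n : ℕ, c (par^[n] v) ≤ c v := by
    intro n
    induction n with
    | zero => rfl
    | succ n ih => rw [Function.iterate_succ_apply']; exact (hinc _).trans ih
  obtain ⟨n, rfl⟩ := (Finset.mem_filter.mp hu).2
  exact hiter n

omit [DecidableEq V] in
theorem serviceCost_rootPath_le {par : V → V} {c : V → ℝ} (hc : ∀ v, 0 ≤ c v)
    (hinc : ∀ v, c (par v) ≤ c v) (v : V) :
    serviceCost c (rootPath par v) ≤ depth par * c v :=
  calc serviceCost c (rootPath par v) ≤ (rootPath par v).card • c v :=
        Finset.sum_le_card_nsmul _ _ _ fun _ hu => cost_le_of_mem_rootPath hinc hu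
    _ = level par v * c v := nsmul_eq_mul _ _
    _ ≤ depth par * c v := by
        gcongr
        · exact hc v
        · exact Finset.le_sup (Finset.mem_univ v)

theorem pairwise_sortedReqs (dl : Req → ℝ) :
    (sortedReqs dl).Pairwise fun a b => dl a ≤ dl b := by
  simpa [sortedReqs] using List.pairwise_mergeSort (le := fun a b : Req => decide (dl a ≤ dl b))
    (fun _ _ _ hab hbc => by simpa using (of_decide_eq_true hab).trans (of_decide_eq_true hbc))
    (fun a b => by simpa using le_total (dl a) (dl b)) _

theorem nodup_sortedReqs (dl : Req → ℝ) : (sortedReqs dl).Nodup :=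
  (List.mergeSort_perm _ _).nodup_iff.mpr (Finset.nodup_toList _)

omit [DecidableEq V] [Fintype Req] in
theorem exists_triggers_noaddAux (par : V → V) (node : Req → V) (arr dl : Req → ℝ)
    (l : List Req) (acc : List (Finset V × ℝ)) :
    ∃ T : List Req, T.Sublist l ∧
      noaddAux par node arr dl l acc = acc ++ T.map (fun ρ => (rootPath par (node ρ), dl ρ)) ∧
      T.Pairwise (fun a b => ¬ SatisfiedBy node arr dl (rootPath par (node a)) (dl a) b) ∧
      ∀ b ∈ T, ∀ s ∈ acc, ¬ SatisfiedBy node arr dl s.1 s.2 b := by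
  induction l generalizing acc with
  | nil => exact ⟨[], by simp [noaddAux]⟩
  | cons ρ l ih =>
    by_cases hsat : ∃ s ∈ acc, SatisfiedBy node arr dl s.1 s.2 ρ
    · obtain ⟨T, hsub, heq, hpw, hacc⟩ := ih acc
      refine ⟨T, hsub.cons _, ?_, hpw, hacc⟩
      rw [noaddAux, if_pos hsat, heq]
    · obtain ⟨T, hsub, heq, hpw, hacc⟩ := ih (acc ++ [(rootPath par (node ρ), dl ρ)])
      refine ⟨ρ :: T, hsub.cons_cons _, ?_, ?_, ?_⟩
      · rw [noaddAux, if_neg hsat, heq]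
        simp
      · refine List.pairwise_cons.mpr ⟨fun b hb => ?_, hpw⟩
        exact hacc b hb (rootPath par (node ρ), dl ρ) (by simp)
      · intro b hb s hs
        rcases List.mem_cons.mp hb with rfl | hb
        · exact fun h => hsat ⟨s, hs, h⟩
        · exact hacc b hb s (by simp [hs])

omit [Fintype V] [DecidableEq V] [Fintype Req] in
def Separated (node : Req → V) (arr dl : Req → ℝ) (a b : Req) : Prop :=
  node a = node b → Disjoint (Set.Icc (arr a) (dl a)) (Set.Icc (arr b) (dl b))

omit [Fintype V] [DecidableEq V] [Fintype Req] in
instance (node : Req → V) (arr dl : Req → ℝ) : Std.Symm (Separated node arr dl) :=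
  ⟨fun _ _ h hnode => (h hnode.symm).symm⟩

omit [DecidableEq V] [Fintype Req] in
theorem separated_of_not_satisfiedBy_rootPath {par : V → V} {node : Req → V} {arr dl : Req → ℝ}
    {a b : Req} (hdl : dl a ≤ dl b)
    (hns : ¬ SatisfiedBy node arr dl (rootPath par (node a)) (dl a) b) :
    Separated node arr dl a b := by
  intro hnode
  have hlt : dl a < arr b := lt_of_not_ge fun hle =>
    hns ⟨hnode ▸ mem_rootPath_self par (node a), hle, hdl⟩
  exact Set.disjoint_left.mpr fun x hxa hxb => (hxa.2.trans_lt hlt).not_ge hxb.1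

omit [Fintype V] [DecidableEq V] [Fintype Req] in
theorem Separated.node_ne {node : Req → V} {arr dl : Req → ℝ} {a b : Req}
    (hab : Separated node arr dl a b) {S : Finset V} {t : ℝ}
    (ha : SatisfiedBy node arr dl S t a) (hb : SatisfiedBy node arr dl S t b) :
    node a ≠ node b := fun hnode =>
  Set.not_disjoint_iff.mpr ⟨t, Set.mem_Icc.mpr ha.2, Set.mem_Icc.mpr hb.2⟩ (hab hnode)

omit [Fintype V] [DecidableEq V] [Fintype Req] in
theorem injOn_node_of_pairwise_separated {node : Req → V} {arr dl : Req → ℝ} {T : List Req}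
    (hT : T.Pairwise (Separated node arr dl)) (S : Finset V) (t : ℝ) :
    Set.InjOn node ↑{ρ ∈ T.toFinset | SatisfiedBy node arr dl S t ρ} := by
  intro a ha b hb hnode
  simp only [Finset.coe_filter, List.mem_toFinset, Set.mem_ofPred_eq] at ha hb
  by_contra hab
  exact hT.forall ha.1 hb.1 hab |>.node_ne ha.2 hb.2 hnode

omit [Fintype V] [Fintype Req] in
theorem sum_le_scheduleCost {c : V → ℝ} (hc : ∀ v, 0 ≤ c v) {node : Req → V} {arr dl : Req → ℝ}
    (L : List (Finset V × ℝ)) (A : Finset Req)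
    (hcover : ∀ ρ ∈ A, ∃ s ∈ L, SatisfiedBy node arr dl s.1 s.2 ρ)
    (hinj : ∀ s ∈ L, Set.InjOn node ↑{ρ ∈ A | SatisfiedBy node arr dl s.1 s.2 ρ}) :
    ∑ ρ ∈ A, c (node ρ) ≤ scheduleCost c L := by
  induction L generalizing A with
  | nil =>
    rw [Finset.eq_empty_of_forall_notMem (s := A) fun ρ hρ => by simpa using hcover ρ hρ]
    simp [scheduleCost]
  | cons s L ih =>
    have hfirst : ∑ ρ ∈ A with SatisfiedBy node arr dl s.1 s.2 ρ, c (node ρ)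
        ≤ serviceCost c s.1 := by
      rw [← Finset.sum_image (hinj s List.mem_cons_self)]
      refine Finset.sum_le_sum_of_subset_of_nonneg ?_ fun u _ _ => hc u
      intro u hu
      obtain ⟨ρ, hρ, rfl⟩ := Finset.mem_image.mp hu
      exact (Finset.mem_filter.mp hρ).2.1
    have hrest : ∑ ρ ∈ A with ¬ SatisfiedBy node arr dl s.1 s.2 ρ, c (node ρ)
        ≤ scheduleCost c L := by
      refine ih _ (fun ρ hρ => ?_) fun s' hs' => ?_
      · obtain ⟨hρA, hns⟩ := Finset.mem_filter.mp hρ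
        obtain ⟨s', hs', hsat⟩ := hcover ρ hρA
        rcases List.mem_cons.mp hs' with rfl | hs'
        · exact absurd hsat hns
        · exact ⟨s', hs', hsat⟩
      · exact (hinj s' (List.mem_cons_of_mem _ hs')).mono <|
          Finset.coe_subset.mpr (Finset.filter_subset_filter _ (Finset.filter_subset _ _))
    rw [← Finset.sum_filter_add_sum_filter_not A (SatisfiedBy node arr dl s.1 s.2)]
    simpa [scheduleCost] using add_le_add hfirst hrest

theorem noadd_D_competitive_general
    (r : V) (par : V → V) (c : V → ℝ) (node : Req → V) (arr dl : Req → ℝ)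
    (hc : ∀ v, 0 < c v)
    (hinc : ∀ v, c (par v) ≤ c v)
    (OPT : List (Finset V × ℝ)) (hOPT : Feasible r par node arr dl OPT) :
    scheduleCost c (noadd par node arr dl) ≤ (depth par : ℝ) * scheduleCost c OPT := by
  have hc' : ∀ v, 0 ≤ c v := fun v => (hc v).le
  obtain ⟨T, hsub, hnoadd, hpw, -⟩ := exists_triggers_noaddAux par node arr dl (sortedReqs dl) []
  have hsep : T.Pairwise (Separated node arr dl) :=
    (hpw.and ((pairwise_sortedReqs dl).sublist hsub)).imp fun h =>
      separated_of_not_satisfiedBy_rootPath h.2 h.1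
  calc scheduleCost c (noadd par node arr dl)
      = (T.map fun ρ => serviceCost c (rootPath par (node ρ))).sum := by
        rw [noadd, hnoadd, List.nil_append, scheduleCost, List.map_map]
        rfl
    _ ≤ (T.map fun ρ => (depth par : ℝ) * c (node ρ)).sum :=
        List.sum_le_sum fun ρ _ => serviceCost_rootPath_le hc' hinc (node ρ)
    _ = depth par * ∑ ρ ∈ T.toFinset, c (node ρ) := by
        rw [List.sum_toFinset _ (hsub.nodup (nodup_sortedReqs dl)), List.sum_map_mul_left]
    _ ≤ depth par * scheduleCost c OPT := by
        gcongr
        exact sum_le_scheduleCost hc' OPT _ (fun ρ _ => hOPT.2 ρ)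
          fun s _ => injOn_node_of_pairwise_separated hsep s.1 s.2

/-- **Theorem 1**: Noadd is `D`-competitive on increasing trees. -/
theorem noadd_D_competitive
    (r : V) (par : V → V) (c : V → ℝ) (node : Req → V) (arr dl : Req → ℝ)
    (hroot : par r = r) (hreach : ∀ v : V, ∃ n : ℕ, par^[n] v = r)
    (hc : ∀ v, 0 < c v) (harr : ∀ ρ, arr ρ ≤ dl ρ) (hdl : Function.Injective dl)
    (hinc : ∀ v, c (par v) ≤ c v)
    (OPT : List (Finset V × ℝ)) (hOPT : Feasible r par node arr dl OPT) :
    scheduleCost c (noadd par node arr dl) ≤ (depth par : ℝ) * scheduleCost c OPT :=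
  noadd_D_competitive_general r par c node arr dl hc hinc OPT hOPT
end

section
/- (Corollary: Noadd is L/(L−1)-competitive on L-increasing trees) Let L > 1 be a real number. For every MLAPD instance whose tree is L-increasing, i.e. c(v) ≥ L·c(par v) for every node v ≠ r, the cost of the schedule produced by the Noadd algorithm is at most L/(L−1) times the cost of every feasible schedule of the instance. -/
open Classical

variable {V : Type} [Fintype V] [DecidableEq V] {Req : Type} [Fintype Req]

/-!
Noadd transmits exactly at the deadlines of a subsequence `T` of the requests sorted by deadline,
the service for `ρ ∈ T` being the root path of `v(ρ)`. On an `L`-increasing tree the costs along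
a root path form a geometrically decreasing sequence, so this service costs at most
`L / (L - 1) · c(v(ρ))`. Charge `ρ ∈ T` to the pair (a service of the feasible schedule that
satisfies `ρ`, the node `v(ρ)`). Two requests `ρ` before `σ` in `T` never get the same pair:
otherwise `a(σ) ≤ t ≤ d(ρ) ≤ d(σ)` for that service's time `t`, so Noadd's service for `ρ`
would already have satisfied `σ`. Distinct pairs are distinct terms of the feasible schedule's
cost, hence `∑_{ρ ∈ T} c(v(ρ))` is at most that cost.
-/

namespace Noadd

section Tree

variable (par : V → V)

omit [DecidableEq V] in
theorem mem_rootPath {u v : V} : u ∈ rootPath par v ↔ ∃ n : ℕ, par^[n] v = u := by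
  simp [rootPath]

omit [DecidableEq V] in
theorem self_mem_rootPath (v : V) : v ∈ rootPath par v :=
  (mem_rootPath par).2 ⟨0, rfl⟩

theorem rootPath_eq_insert (v : V) : rootPath par v = insert v (rootPath par (par v)) := by
  ext u
  simp only [Finset.mem_insert, mem_rootPath]
  constructor
  · rintro ⟨_ | n, rfl⟩
    · exact Or.inl rfl
    · exact Or.inr ⟨n, rfl⟩
  · rintro (rfl | ⟨n, rfl⟩)
    · exact ⟨0, rfl⟩
    · exact ⟨n + 1, rfl⟩

omit [DecidableEq V] in
theorem rootPath_of_isFixedPt {r : V} (hroot : par r = r) : rootPath par r = {r} := by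
  ext u
  simp only [mem_rootPath, Function.iterate_fixed hroot, Finset.mem_singleton, eq_comm,
    exists_const]

omit [Fintype V] in
theorem serviceCost_insert_le {c : V → ℝ} (hc : ∀ v, 0 ≤ c v) (v : V) (S : Finset V) :
    serviceCost c (insert v S) ≤ c v + serviceCost c S := by
  by_cases hv : v ∈ S
  · rw [Finset.insert_eq_of_mem hv]
    linarith [hc v]
  · exact (Finset.sum_insert hv).le

theorem serviceCost_rootPath_le {r : V} (hroot : par r = r) {c : V → ℝ} (hc : ∀ v, 0 ≤ c v)
    {L : ℝ} (hL : 1 < L) (hLinc : ∀ v, v ≠ r → L * c (par v) ≤ c v)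
    {v : V} (hv : ∃ n, par^[n] v = r) :
    serviceCost c (rootPath par v) ≤ L / (L - 1) * c v := by
  obtain ⟨n, hn⟩ := hv
  have hL1 : 0 < L - 1 := by linarith
  have hroot_le : serviceCost c (rootPath par r) ≤ L / (L - 1) * c r := by
    have hratio : 1 ≤ L / (L - 1) := (one_le_div hL1).2 (by linarith)
    rw [rootPath_of_isFixedPt par hroot, serviceCost, Finset.sum_singleton]
    exact le_mul_of_one_le_left (hc r) hratio
  induction n generalizing v with
  | zero =>
    obtain rfl : v = r := hn
    exact hroot_le
  | succ n ih =>
    by_cases hv : v = r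
    · exact hv ▸ hroot_le
    have hpar := ih (v := par v) hn
    have hstep : L / (L - 1) * c (par v) ≤ c v / (L - 1) := by
      rw [div_mul_eq_mul_div]
      exact div_le_div_of_nonneg_right (hLinc v hv) hL1.le
    calc serviceCost c (rootPath par v)
        ≤ c v + serviceCost c (rootPath par (par v)) := by
          rw [rootPath_eq_insert par v]
          exact serviceCost_insert_le hc v _
      _ ≤ c v + c v / (L - 1) := by linarith
      _ = L / (L - 1) * c v := by field_simp; ring

end Tree

section Schedule

variable {node : Req → V} {arr dl : Req → ℝ}

omit [DecidableEq V] [Fintype Req] in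
theorem SatisfiedBy.rootPath_of_common (par : V → V) {S : Finset V} {t : ℝ} {a b : Req}
    (ha : SatisfiedBy node arr dl S t a) (hb : SatisfiedBy node arr dl S t b)
    (hnode : node a = node b) (hdl : dl a ≤ dl b) :
    SatisfiedBy node arr dl (rootPath par (node a)) (dl a) b :=
  ⟨hnode ▸ self_mem_rootPath par (node a), hb.2.1.trans ha.2.2, hdl⟩

omit [Fintype V] [DecidableEq V] [Fintype Req] in
theorem Feasible.exists_get {r : V} {par : V → V} {sched : List (Finset V × ℝ)}
    (h : Feasible r par node arr dl sched) (ρ : Req) :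
    ∃ i : Fin sched.length, SatisfiedBy node arr dl (sched.get i).1 (sched.get i).2 ρ := by
  obtain ⟨s, hs, hsat⟩ := h.2 ρ
  obtain ⟨i, rfl⟩ := List.mem_iff_get.1 hs
  exact ⟨i, hsat⟩

theorem sum_map_le_scheduleCost {c : V → ℝ} (hc : ∀ v, 0 ≤ c v)
    (sched : List (Finset V × ℝ)) (P : List (Fin sched.length × V)) (hP : P.Nodup)
    (hmem : ∀ p ∈ P, p.2 ∈ (sched.get p.1).1) :
    (P.map fun p => c p.2).sum ≤ scheduleCost c sched := by
  calc (P.map fun p => c p.2).sum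
      = ∑ p ∈ P.toFinset, c p.2 := (List.sum_toFinset _ hP).symm
    _ ≤ ∑ p : Fin sched.length × V with p.2 ∈ (sched.get p.1).1, c p.2 :=
        Finset.sum_le_sum_of_subset_of_nonneg
          (fun p hp => Finset.mem_filter.2 ⟨Finset.mem_univ p, hmem p (List.mem_toFinset.1 hp)⟩)
          (fun p _ _ => hc p.2)
    _ = ∑ i : Fin sched.length, serviceCost c (sched.get i).1 := by
        refine Finset.sum_finset_product' _ Finset.univ (fun i => (sched.get i).1)
          (f := fun _ u => c u) ?_
        simp
    _ = scheduleCost c sched := Fin.sum_univ_fun_getElem sched fun s => serviceCost c s.1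

theorem sortedReqs_pairwise (dl : Req → ℝ) :
    (sortedReqs dl).Pairwise fun a b => dl a ≤ dl b := by
  refine (List.pairwise_mergeSort (fun a b c => ?_) (fun a b => ?_) _).imp (by simp)
  · simpa using le_trans
  · simpa using le_total (dl a) (dl b)

omit [DecidableEq V] [Fintype Req] in
-- `T` lists the requests whose deadlines trigger a transmission; the third clause is the
-- invariant that lets the induction establish the fourth.
theorem exists_noaddAux_eq (par : V → V) (l : List Req) (acc : List (Finset V × ℝ)) :
    ∃ T : List Req, T.Sublist l ∧
      noaddAux par node arr dl l acc = acc ++ T.map (fun ρ => (rootPath par (node ρ), dl ρ)) ∧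
      (∀ b ∈ T, ∀ s ∈ acc, ¬ SatisfiedBy node arr dl s.1 s.2 b) ∧
      T.Pairwise fun a b => ¬ SatisfiedBy node arr dl (rootPath par (node a)) (dl a) b := by
  induction l generalizing acc with
  | nil => exact ⟨[], List.Sublist.refl _, by simp [noaddAux], by simp, List.Pairwise.nil⟩
  | cons ρ rest ih =>
    by_cases h : ∃ s ∈ acc, SatisfiedBy node arr dl s.1 s.2 ρ
    · obtain ⟨T, hsub, heq, hacc, hpw⟩ := ih acc
      refine ⟨T, hsub.cons ρ, ?_, hacc, hpw⟩
      rw [noaddAux, if_pos h, heq]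
    · obtain ⟨T, hsub, heq, hacc, hpw⟩ := ih (acc ++ [(rootPath par (node ρ), dl ρ)])
      refine ⟨ρ :: T, hsub.cons_cons ρ, ?_, ?_, ?_⟩
      · rw [noaddAux, if_neg h, heq]
        simp
      · rintro b (_ | ⟨_, hb⟩) s hs
        · exact fun hsat => h ⟨s, hs, hsat⟩
        · exact hacc b hb s (List.mem_append_left _ hs)
      · exact hpw.cons fun b hb => hacc b hb (rootPath par (node ρ), dl ρ) (by simp)

omit [DecidableEq V] in
theorem exists_noadd_eq (par : V → V) (node : Req → V) (arr dl : Req → ℝ) :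
    ∃ T : List Req, noadd par node arr dl = T.map (fun ρ => (rootPath par (node ρ), dl ρ)) ∧
      T.Pairwise fun a b =>
        dl a ≤ dl b ∧ ¬ SatisfiedBy node arr dl (rootPath par (node a)) (dl a) b := by
  obtain ⟨T, hsub, heq, -, hpw⟩ := exists_noaddAux_eq (arr := arr) par (sortedReqs dl) []
  exact ⟨T, heq, ((sortedReqs_pairwise dl).sublist hsub).and hpw⟩

end Schedule

end Noadd

open Noadd in
theorem noadd_L_increasing_competitive_general
    (r : V) (par : V → V) (c : V → ℝ) (node : Req → V) (arr dl : Req → ℝ)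
    (hroot : par r = r) (hreach : ∀ v : V, ∃ n : ℕ, par^[n] v = r)
    (hc : ∀ v, 0 < c v)
    (L : ℝ) (hL : 1 < L) (hLinc : ∀ v : V, v ≠ r → L * c (par v) ≤ c v)
    (OPT : List (Finset V × ℝ)) (hOPT : Feasible r par node arr dl OPT) :
    scheduleCost c (noadd par node arr dl) ≤ (L / (L - 1)) * scheduleCost c OPT := by
  have hc' : ∀ v, 0 ≤ c v := fun v => (hc v).le
  obtain ⟨T, hnoadd, hT⟩ := exists_noadd_eq par node arr dl
  choose f hf using hOPT.exists_get
  have hcharge : (T.map fun ρ => (f ρ, node ρ)).Nodup := by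
    refine List.pairwise_map.2 (hT.imp fun {a b} ⟨hle, hns⟩ heq => hns ?_)
    obtain ⟨hfab, hnode⟩ := Prod.mk.inj heq
    have hb : SatisfiedBy node arr dl (OPT.get (f a)).1 (OPT.get (f a)).2 b := by
      rw [hfab]; exact hf b
    exact (hf a).rootPath_of_common par hb hnode hle
  calc scheduleCost c (noadd par node arr dl)
      = (T.map fun ρ => serviceCost c (rootPath par (node ρ))).sum := by
        rw [hnoadd, scheduleCost, List.map_map]; rfl
    _ ≤ (T.map fun ρ => L / (L - 1) * c (node ρ)).sum :=
        List.sum_le_sum fun ρ _ =>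
          serviceCost_rootPath_le par hroot hc' hL hLinc (hreach _)
    _ = L / (L - 1) * ((T.map fun ρ => (f ρ, node ρ)).map fun p => c p.2).sum := by
        rw [List.sum_map_mul_left, List.map_map]; rfl
    _ ≤ L / (L - 1) * scheduleCost c OPT := by
        gcongr
        exact sum_map_le_scheduleCost hc' OPT _ hcharge
          (List.forall_mem_map.2 fun ρ _ => (hf ρ).1)

/-- **Corollary**: Noadd is `L/(L-1)`-competitive on `L`-increasing trees. -/
theorem noadd_L_increasing_competitive
    (r : V) (par : V → V) (c : V → ℝ) (node : Req → V) (arr dl : Req → ℝ)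
    (hroot : par r = r) (hreach : ∀ v : V, ∃ n : ℕ, par^[n] v = r)
    (hc : ∀ v, 0 < c v) (harr : ∀ ρ, arr ρ ≤ dl ρ) (hdl : Function.Injective dl)
    (L : ℝ) (hL : 1 < L) (hLinc : ∀ v : V, v ≠ r → L * c (par v) ≤ c v)
    (OPT : List (Finset V × ℝ)) (hOPT : Feasible r par node arr dl OPT) :
    scheduleCost c (noadd par node arr dl) ≤ (L / (L - 1)) * scheduleCost c OPT :=
  noadd_L_increasing_competitive_general r par c node arr dl hroot hreach hc L hL hLinc OPT hOPT
end

section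
/- (Charging claim underlying the L-increasing Corollary) Let L > 1 be a real number and let an MLAPD instance be given whose tree is L-increasing, i.e. c(v) ≥ L·c(par v) for every node v ≠ r. Let OPT be any feasible schedule. Let ρ_1, …, ρ_m be requests with d(ρ_1) < d(ρ_2) < … < d(ρ_m) such that for each i, the request ρ_i is not satisfied by any of the services (P(v(ρ_1)), d(ρ_1)), …, (P(v(ρ_{i−1})), d(ρ_{i−1})). Then Σ_{i=1}^m Σ_{u ∈ P(v(ρ_i))} c(u) ≤ (L/(L−1)) · cost(OPT). -/
open Classical

variable {V : Type} [Fintype V] [DecidableEq V] {Req : Type} [Fintype Req]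

/-!
Charge each request `ρ i` to the cost `c (v(ρ i))` of its own node inside a service of `OPT`
that satisfies it. Two requests charged to the same service have distinct nodes: if they had the
same node, the earlier-deadline one, served at its deadline along its root path, would satisfy the
later one, since both windows contain the time of the common service. Hence the charges fit into
`cost(OPT)`. In an `L`-increasing tree the costs along a root path decrease at least geometrically
with ratio `1 / L`, so each root path costs at most `L / (L - 1)` times the cost of its lowest node.
-/

open Finset Function

section RootPath

variable {par : V → V}

omit [DecidableEq V] in
theorem mem_rootPath {v u : V} : u ∈ rootPath par v ↔ ∃ n : ℕ, par^[n] v = u := by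
  simp [rootPath]

omit [DecidableEq V] in
theorem self_mem_rootPath (v : V) : v ∈ rootPath par v :=
  mem_rootPath.2 ⟨0, rfl⟩

omit [DecidableEq V] in
theorem rootPath_of_isFixedPt {r : V} (hroot : par r = r) : rootPath par r = {r} := by
  ext u
  rw [mem_rootPath, mem_singleton]
  constructor
  · rintro ⟨n, rfl⟩
    exact iterate_fixed hroot n
  · rintro rfl
    exact ⟨0, rfl⟩

theorem rootPath_eq_insert (v : V) : rootPath par v = insert v (rootPath par (par v)) := by
  ext u
  simp only [mem_rootPath, mem_insert]
  constructor
  · rintro ⟨_ | n, rfl⟩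
    · exact .inl rfl
    · exact .inr ⟨n, (iterate_succ_apply par n v).symm⟩
  · rintro (rfl | ⟨n, rfl⟩)
    · exact ⟨0, rfl⟩
    · exact ⟨n + 1, iterate_succ_apply par n v⟩

omit [DecidableEq V] in
theorem not_mem_rootPath_par {r v : V} (hroot : par r = r) {N : ℕ} (hN : par^[N] v = r)
    (hvr : v ≠ r) : v ∉ rootPath par (par v) := by
  rintro hmem
  obtain ⟨n, hn⟩ := mem_rootPath.1 hmem
  have hper : IsPeriodicPt par (n + 1) v := by
    rwa [IsPeriodicPt, IsFixedPt, iterate_succ_apply]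
  apply hvr
  calc v = par^[(n + 1) * N] v := ((hper.mul_const N).eq).symm
    _ = par^[n * N] (par^[N] v) := by rw [add_one_mul, iterate_add_apply]
    _ = r := by rw [hN, iterate_fixed hroot]

omit [DecidableEq V] in
theorem sum_rootPath_le_of_iterate_eq {r : V} {c : V → ℝ} {L : ℝ} (hroot : par r = r)
    (hcr : 0 ≤ c r) (hL : 1 < L) (hLinc : ∀ v, v ≠ r → L * c (par v) ≤ c v) {n : ℕ} {v : V}
    (hv : par^[n] v = r) : ∑ u ∈ rootPath par v, c u ≤ L / (L - 1) * c v := by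
  have hL1 : 0 < L - 1 := by linarith
  induction n generalizing v with
  | zero =>
    obtain rfl : v = r := hv
    rw [rootPath_of_isFixedPt hroot, sum_singleton]
    exact le_mul_of_one_le_left hcr ((one_le_div hL1).2 (by linarith))
  | succ n ih =>
    obtain rfl | hvr := eq_or_ne v r
    · exact ih (iterate_fixed hroot n)
    have hpath := ih (v := par v) (by rwa [← iterate_succ_apply])
    have hstep : L / (L - 1) * c (par v) ≤ c v / (L - 1) := by
      rw [div_mul_eq_mul_div]
      gcongr
      exact hLinc v hvr
    rw [rootPath_eq_insert, sum_insert (not_mem_rootPath_par hroot hv hvr)]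
    calc c v + ∑ u ∈ rootPath par (par v), c u ≤ c v + c v / (L - 1) := by linarith
      _ = L / (L - 1) * c v := by field_simp; ring

end RootPath

theorem sum_comp_le_sum_sum_of_injective_pair {ι κ α : Type*} [Fintype ι] [Fintype κ]
    {k : ι → κ} {f : ι → α} {S : κ → Finset α} {c : α → ℝ} (hc : ∀ a, 0 ≤ c a)
    (hmem : ∀ i, f i ∈ S (k i)) (hinj : Injective fun i => (k i, f i)) :
    ∑ i, c (f i) ≤ ∑ j, ∑ a ∈ S j, c a := by
  classical
  rw [← sum_fiberwise univ k fun i => c (f i)]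
  refine sum_le_sum fun j _ => ?_
  have hfib : ∀ i ∈ ({i | k i = j} : Finset ι), k i = j := fun i hi => (mem_filter.1 hi).2
  rw [← sum_image fun i hi i' hi' h => hinj (Prod.ext ((hfib i hi).trans (hfib i' hi').symm) h)]
  refine sum_le_sum_of_subset_of_nonneg ?_ fun a _ _ => hc a
  intro a ha
  obtain ⟨i, hi, rfl⟩ := mem_image.1 ha
  exact hfib i hi ▸ hmem i

section Charging

variable {node : Req → V} {arr dl : Req → ℝ}

omit [DecidableEq V] [Fintype Req] in
theorem SatisfiedBy.rootPath_deadline (par : V → V) {S S' : Finset V} {t : ℝ} {ρ σ : Req}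
    (hρ : SatisfiedBy node arr dl S t ρ) (hσ : SatisfiedBy node arr dl S' t σ)
    (hdl : dl σ ≤ dl ρ) (hnode : node ρ = node σ) :
    SatisfiedBy node arr dl (rootPath par (node σ)) (dl σ) ρ :=
  ⟨hnode ▸ self_mem_rootPath _, hρ.2.1.trans hσ.2.2, hdl⟩

omit [DecidableEq V] [Fintype Req] in
theorem eq_of_satisfiedBy_of_node_eq {par : V → V} {ι : Type*} [LinearOrder ι] {ρ : ι → Req}
    (hmono : Monotone (dl ∘ ρ))
    (hunsat : ∀ i j, j < i →
      ¬ SatisfiedBy node arr dl (rootPath par (node (ρ j))) (dl (ρ j)) (ρ i))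
    {S S' : Finset V} {t : ℝ} {i j : ι} (hi : SatisfiedBy node arr dl S t (ρ i))
    (hj : SatisfiedBy node arr dl S' t (ρ j)) (hnode : node (ρ i) = node (ρ j)) : i = j := by
  have key : ∀ {a b S S'}, SatisfiedBy node arr dl S t (ρ a) →
      SatisfiedBy node arr dl S' t (ρ b) → node (ρ a) = node (ρ b) → a ≤ b :=
    fun ha hb hab => not_lt.1 fun hba =>
      hunsat _ _ hba (ha.rootPath_deadline par hb (hmono hba.le) hab)
  exact le_antisymm (key hi hj hnode) (key hj hi hnode.symm)

end Charging

theorem charging_claim_L_increasing_general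
    (r : V) (par : V → V) (c : V → ℝ) (node : Req → V) (arr dl : Req → ℝ)
    (hroot : par r = r) (hreach : ∀ v : V, ∃ n : ℕ, par^[n] v = r)
    (hc : ∀ v, 0 < c v)
    (L : ℝ) (hL : 1 < L) (hLinc : ∀ v : V, v ≠ r → L * c (par v) ≤ c v)
    (OPT : List (Finset V × ℝ)) (hOPT : Feasible r par node arr dl OPT)
    (m : ℕ) (ρ : Fin m → Req)
    (hmono : ∀ i j : Fin m, i < j → dl (ρ i) < dl (ρ j))
    (hunsat : ∀ i j : Fin m, j < i →
      ¬ SatisfiedBy node arr dl (rootPath par (node (ρ j))) (dl (ρ j)) (ρ i)) :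
    ∑ i : Fin m, ∑ u ∈ rootPath par (node (ρ i)), c u ≤
      (L / (L - 1)) * scheduleCost c OPT := by
  have hserved : ∀ i, ∃ j : Fin OPT.length, SatisfiedBy node arr dl OPT[j].1 OPT[j].2 (ρ i) := by
    intro i
    obtain ⟨s, hs, hsat⟩ := hOPT.2 (ρ i)
    obtain ⟨j, rfl⟩ := List.mem_iff_get.1 hs
    exact ⟨j, hsat⟩
  choose k hk using hserved
  have hcharge : ∑ i, c (node (ρ i)) ≤ scheduleCost c OPT := by
    rw [scheduleCost, ← Fin.sum_univ_fun_getElem]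
    refine sum_comp_le_sum_sum_of_injective_pair (fun v => (hc v).le) (fun i => (hk i).1) ?_
    intro i i' h
    obtain ⟨hki, hnode⟩ := Prod.mk.inj h
    exact eq_of_satisfiedBy_of_node_eq (StrictMono.monotone hmono) hunsat (hk i)
      (hki ▸ hk i') hnode
  calc ∑ i, ∑ u ∈ rootPath par (node (ρ i)), c u
      ≤ ∑ i, L / (L - 1) * c (node (ρ i)) := sum_le_sum fun i _ =>
        sum_rootPath_le_of_iterate_eq hroot (hc r).le hL hLinc (hreach _).choose_spec
    _ = L / (L - 1) * ∑ i, c (node (ρ i)) := (mul_sum _ _ _).symm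
    _ ≤ L / (L - 1) * scheduleCost c OPT :=
        mul_le_mul_of_nonneg_left hcharge (div_nonneg (by linarith) (by linarith))

/-- **Charging claim underlying the L-increasing Corollary**: in an `L`-increasing tree
(`L > 1`), if requests `ρ 0, …, ρ (m-1)` have strictly increasing deadlines and each
`ρ i` is not satisfied by any of the services `(P(v(ρ j)), d(ρ j))` for `j < i`, then
the total cost of the root paths of their nodes is at most `L/(L-1)` times the cost of
any feasible schedule. -/
theorem charging_claim_L_increasing
    (r : V) (par : V → V) (c : V → ℝ) (node : Req → V) (arr dl : Req → ℝ)
    (hroot : par r = r) (hreach : ∀ v : V, ∃ n : ℕ, par^[n] v = r)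
    (hc : ∀ v, 0 < c v) (harr : ∀ ρ, arr ρ ≤ dl ρ) (hdl : Function.Injective dl)
    (L : ℝ) (hL : 1 < L) (hLinc : ∀ v : V, v ≠ r → L * c (par v) ≤ c v)
    (OPT : List (Finset V × ℝ)) (hOPT : Feasible r par node arr dl OPT)
    (m : ℕ) (ρ : Fin m → Req)
    (hmono : ∀ i j : Fin m, i < j → dl (ρ i) < dl (ρ j))
    (hunsat : ∀ i j : Fin m, j < i →
      ¬ SatisfiedBy node arr dl (rootPath par (node (ρ j))) (dl (ρ j)) (ρ i)) :
    ∑ i : Fin m, ∑ u ∈ rootPath par (node (ρ i)), c u ≤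
      (L / (L - 1)) * scheduleCost c OPT :=
  charging_claim_L_increasing_general r par c node arr dl hroot hreach hc L hL hLinc OPT hOPT m ρ
    hmono hunsat
end

section
/- (Lemma: lateness propagates along the path to the earliest due request) Fix an MLAPD instance, a feasible schedule OPT, a time t, and a set R' ⊆ R of requests each with arrival time at most t. For a node u, let T_u(R') be the set of requests of R' issued at nodes of the subtree T_u, let d^t(u) be the minimum deadline over T_u(R') (when nonempty), and let nos(u,t) be the minimum time τ > t at which OPT transmits a service containing u (∞ if there is none). Suppose v is a node with T_v(R') nonempty and d^t(v) < nos(v,t), and let ρ be the request of T_v(R') with minimum deadline. Then every node u lying on the path from v to v(ρ), i.e. every u with v ∈ P(u) and u ∈ P(v(ρ)), satisfies d^t(u) < nos(u,t). -/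
open Classical

variable {V : Type} [Fintype V] [DecidableEq V] {Req : Type} [Fintype Req]

lemma rootPath_mem_iff (par : V → V) (v u : V) :
    u ∈ rootPath par v ↔ ∃ n : ℕ, par^[n] v = u := by
  simp [rootPath]

lemma rootPath_trans (par : V → V) {a b c : V}
    (h1 : a ∈ rootPath par b) (h2 : b ∈ rootPath par c) : a ∈ rootPath par c := by
  rw [rootPath_mem_iff] at *
  obtain ⟨m, hm⟩ := h1
  obtain ⟨n, hn⟩ := h2
  exact ⟨m + n, by rw [Function.iterate_add_apply, hn, hm]⟩

lemma serviceTree_closed {r : V} {par : V → V} {S : Finset V}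
    (hS : IsServiceTree r par S) {a b : V} (h : a ∈ rootPath par b) (hb : b ∈ S) :
    a ∈ S := by
  rw [rootPath_mem_iff] at h
  obtain ⟨n, hn⟩ := h
  subst hn
  induction n with
  | zero => exact hb
  | succ k ih => rw [Function.iterate_succ_apply']; exact hS.2 _ ih

/-- **Lemma (lateness propagates along the path to the earliest due request)**:
fix a feasible schedule `OPT`, a time `t`, and a set `R'` of requests that have all
arrived by `t`.  If `ρ` is the request of minimum deadline among the requests of `R'`
issued in the subtree `T_v`, and `d^t(v) < nos(v,t)` (i.e. `dl ρ` is smaller than the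
time of every `OPT` service containing `v` transmitted after `t`), then every node `u`
on the path from `v` to `v(ρ)` satisfies `d^t(u) < nos(u,t)`: the request of minimum
deadline among the requests of `R'` issued in `T_u` has deadline smaller than the time
of every `OPT` service containing `u` transmitted after `t`. -/
theorem late_propagates_down_path
    (r : V) (par : V → V) (c : V → ℝ) (node : Req → V) (arr dl : Req → ℝ)
    (hroot : par r = r) (hreach : ∀ v : V, ∃ n : ℕ, par^[n] v = r)
    (hc : ∀ v, 0 < c v) (harr : ∀ ρ, arr ρ ≤ dl ρ) (hdl : Function.Injective dl)
    (OPT : List (Finset V × ℝ)) (hOPT : Feasible r par node arr dl OPT)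
    (t : ℝ) (R' : Finset Req) (hR' : ∀ ρ ∈ R', arr ρ ≤ t)
    (v : V) (ρ : Req)
    (hρmem : ρ ∈ R'.filter (fun γ => v ∈ rootPath par (node γ)))
    (hρmin : ∀ γ ∈ R'.filter (fun γ => v ∈ rootPath par (node γ)), dl ρ ≤ dl γ)
    (hvlate : ∀ s ∈ OPT, v ∈ s.1 → t < s.2 → dl ρ < s.2)
    (u : V) (hu₁ : v ∈ rootPath par u) (hu₂ : u ∈ rootPath par (node ρ)) :
    ∃ γ ∈ R'.filter (fun γ' => u ∈ rootPath par (node γ')),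
      (∀ γ' ∈ R'.filter (fun γ' => u ∈ rootPath par (node γ')), dl γ ≤ dl γ') ∧
      ∀ s ∈ OPT, u ∈ s.1 → t < s.2 → dl γ < s.2 := by
  have hρu : ρ ∈ R'.filter (fun γ' => u ∈ rootPath par (node γ')) := by
    simp only [Finset.mem_filter] at hρmem ⊢
    exact ⟨hρmem.1, hu₂⟩
  obtain ⟨γ, hγ, hγmin⟩ := Finset.exists_min_image _ dl ⟨ρ, hρu⟩
  refine ⟨γ, hγ, hγmin, ?_⟩
  intro s hs hus hts
  have hsubset : γ ∈ R'.filter (fun γ' => v ∈ rootPath par (node γ')) := by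
    simp only [Finset.mem_filter] at hγ ⊢
    exact ⟨hγ.1, rootPath_trans par hu₁ hγ.2⟩
  have hvs : v ∈ s.1 := serviceTree_closed (hOPT.1 s hs) hu₁ hus
  exact lt_of_le_of_lt (le_trans (hγmin ρ hρu) (le_refl _)) (hvlate s hs hvs hts) |>.trans_le' (le_refl _)
end

section
/- (Lemma: total investment received is at most level times cost) Let P be a finite type, L : P → ℕ a level function with L(p) ≥ 1 for all p, c : P → ℝ with c(p) > 0 for all p, and w : P → P → ℝ a direct-investment weight with w(p,q) ≥ 0 for all p, q, such that w(p,q) > 0 implies L(p) < L(q), and such that for every q, Σ_{p} w(p,q) ≤ c(q). Define I : P → ℝ by strong recursion on the level: I(q) = c(q) + Σ_{p with L(p) < L(q)} (I(p)/c(p))·w(p,q). Then I(q) ≤ L(q)·c(q) for every q. -/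
open Classical

/-! Induction on the level. Every direct investor `p` of `q` sits strictly below `q`, so by
induction its investment-to-cost ratio `I p / c p` is at most `L p ≤ L q - 1`; as the direct
investments into `q` total at most `c q`, this gives `I q ≤ c q + (L q - 1) * c q`. -/

theorem Finset.sum_mul_le_mul_sum_of_le {ι : Type*} (s : Finset ι) {f w : ι → ℝ} {M : ℝ}
    (hf : ∀ i ∈ s, f i ≤ M) (hw : ∀ i ∈ s, 0 ≤ w i) :
    ∑ i ∈ s, f i * w i ≤ M * ∑ i ∈ s, w i := by
  rw [Finset.mul_sum]
  exact Finset.sum_le_sum fun i hi => mul_le_mul_of_nonneg_right (hf i hi) (hw i hi)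

section Investment

variable {P : Type*} {L : P → ℕ} {c : P → ℝ} {w : P → P → ℝ} {I : P → ℝ}

theorem ratio_le_level_sub_one_of_lt {p q : P} (hc : 0 < c p) (hIp : I p ≤ L p * c p)
    (hpq : L p < L q) : I p / c p ≤ (L q : ℝ) - 1 := by
  have hLpq : (L p : ℝ) ≤ L q - 1 := by
    rw [le_sub_iff_add_le]
    exact_mod_cast hpq
  rw [div_le_iff₀ hc]
  exact hIp.trans (mul_le_mul_of_nonneg_right hLpq hc.le)

theorem investment_le_level_mul_cost_of_lower_levels [Fintype P] {q : P} (hLq : 1 ≤ L q)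
    (hc : ∀ p, 0 < c p) (hw : ∀ p, 0 ≤ w p q) (hin : ∑ p, w p q ≤ c q)
    (hIq : I q = c q + ∑ p ∈ Finset.univ.filter (fun p => L p < L q), (I p / c p) * w p q)
    (ih : ∀ p, L p < L q → I p ≤ L p * c p) :
    I q ≤ L q * c q := by
  set lower := Finset.univ.filter (fun p => L p < L q)
  have hratio : ∀ p ∈ lower, I p / c p ≤ (L q : ℝ) - 1 := fun p hp =>
    have hpq := (Finset.mem_filter.mp hp).2
    ratio_le_level_sub_one_of_lt (hc p) (ih p hpq) hpq
  have hlower : ∑ p ∈ lower, w p q ≤ c q :=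
    (Finset.sum_le_sum_of_subset_of_nonneg (Finset.filter_subset _ _) fun p _ _ => hw p).trans hin
  have hLq' : (0 : ℝ) ≤ L q - 1 := by
    rw [sub_nonneg]
    exact_mod_cast hLq
  calc I q ≤ c q + ((L q : ℝ) - 1) * ∑ p ∈ lower, w p q := by
        rw [hIq]
        gcongr
        exact lower.sum_mul_le_mul_sum_of_le hratio fun p _ => hw p
    _ ≤ c q + ((L q : ℝ) - 1) * c q := by gcongr
    _ = L q * c q := by ring

end Investment

theorem total_investment_received_le_level_mul_cost_general
    {P : Type} [Fintype P] (L : P → ℕ) (c : P → ℝ) (w : P → P → ℝ)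
    (hL : ∀ p, 1 ≤ L p) (hc : ∀ p, 0 < c p)
    (hw : ∀ p q, 0 ≤ w p q)
    (hin : ∀ q, ∑ p, w p q ≤ c q)
    (I : P → ℝ)
    (hI : ∀ q, I q = c q +
      ∑ p ∈ Finset.univ.filter (fun p => L p < L q), (I p / c p) * w p q) :
    ∀ q, I q ≤ (L q : ℝ) * c q := by
  intro q
  induction q using (measure L).wf.induction with
  | _ q ih =>
    exact investment_le_level_mul_cost_of_lower_levels (hL q) hc (hw · q) (hin q) (hI q) ih

/-- **Lemma (total investment received is at most level times cost)**: on a finite type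
`P` with a level function `L ≥ 1`, positive costs `c`, and nonnegative direct-investment
weights `w` flowing only from strictly lower levels to strictly higher levels and with
total incoming weight at any `q` at most `c q`, the total investment
`I q = c q + ∑_{L p < L q} (I p / c p) * w p q` (defined by strong recursion on the
level) satisfies `I q ≤ L q * c q` for every `q`. -/
theorem total_investment_received_le_level_mul_cost
    {P : Type} [Fintype P] (L : P → ℕ) (c : P → ℝ) (w : P → P → ℝ)
    (hL : ∀ p, 1 ≤ L p) (hc : ∀ p, 0 < c p)
    (hw : ∀ p q, 0 ≤ w p q) (hlev : ∀ p q, 0 < w p q → L p < L q)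
    (hin : ∀ q, ∑ p, w p q ≤ c q)
    (I : P → ℝ)
    (hI : ∀ q, I q = c q +
      ∑ p ∈ Finset.univ.filter (fun p => L p < L q), (I p / c p) * w p q) :
    ∀ q, I q ≤ (L q : ℝ) * c q :=
  total_investment_received_le_level_mul_cost_general L c w hL hc hw hin I hI
end

section
/- (Lemma: total investment made is at most (D − level) times cost) Let P be a finite type, D a natural number, L : P → ℕ a level function with 1 ≤ L(p) ≤ D for all p, c : P → ℝ with c(p) > 0 for all p, and w : P → P → ℝ a direct-investment weight with w(p,q) ≥ 0 for all p,q, such that w(p,q) > 0 implies L(p) < L(q), and such that for every p, Σ_{q} w(p,q) ≤ c(p). Define IM : P → ℝ by strong recursion on D − L: IM(p) = Σ_{q with L(q) > L(p)} ( w(p,q) + (w(p,q)/c(q))·IM(q) ). Then IM(p) ≤ (D − L(p))·c(p) for every p. -/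
open Classical

/-- **Lemma (total investment made is at most (D − level) times cost)**: on a finite
type `P` with a level function `1 ≤ L ≤ D`, positive costs `c`, and nonnegative
direct-investment weights `w` flowing only from strictly lower levels to strictly
higher levels and with total outgoing weight from any `p` at most `c p`, the total
investment made `IM p = ∑_{L q > L p} (w p q + (w p q / c q) * IM q)` (defined by
strong recursion on `D − L`) satisfies `IM p ≤ (D − L p) * c p` for every `p`. -/
theorem total_investment_made_le
    {P : Type} [Fintype P] (D : ℕ) (L : P → ℕ) (c : P → ℝ) (w : P → P → ℝ)
    (hL1 : ∀ p, 1 ≤ L p) (hLD : ∀ p, L p ≤ D) (hc : ∀ p, 0 < c p)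
    (hw : ∀ p q, 0 ≤ w p q) (hlev : ∀ p q, 0 < w p q → L p < L q)
    (hout : ∀ p, ∑ q, w p q ≤ c p)
    (IM : P → ℝ)
    (hIM : ∀ p, IM p =
      ∑ q ∈ Finset.univ.filter (fun q => L p < L q), (w p q + (w p q / c q) * IM q)) :
    ∀ p, IM p ≤ ((D : ℝ) - (L p : ℝ)) * c p := by
  suffices h : ∀ n, ∀ p, D - L p ≤ n → IM p ≤ ((D : ℝ) - (L p : ℝ)) * c p by
    intro p; exact h (D - L p) p le_rfl
  intro n
  induction n with
  | zero =>
    intro p hp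
    have hDL : L p = D := le_antisymm (hLD p) (by omega)
    have : IM p = 0 := by
      rw [hIM p]
      apply Finset.sum_eq_zero
      intro q hq
      simp only [Finset.mem_filter] at hq
      exact absurd (lt_of_lt_of_le hq.2 (hLD q)) (by omega)
    rw [this, hDL]
    simp
  | succ n ih =>
    intro p hp
    rw [hIM p]
    have hDLp : (0:ℝ) ≤ (D : ℝ) - (L p : ℝ) := by
      have := hLD p
      have : (L p : ℝ) ≤ D := by exact_mod_cast this
      linarith
    have key : ∀ q ∈ Finset.univ.filter (fun q => L p < L q),
        w p q + (w p q / c q) * IM q ≤ w p q * ((D : ℝ) - (L p : ℝ)) := by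
      intro q hq
      simp only [Finset.mem_filter] at hq
      rcases eq_or_lt_of_le (hw p q) with h0 | h0
      · rw [← h0]; simp
      · have hLpq := hlev p q h0
        have hIMq : IM q ≤ ((D : ℝ) - (L q : ℝ)) * c q := by
          apply ih q
          have := hLD q
          omega
        have hcq := hc q
        have h1 : (w p q / c q) * IM q ≤ w p q * ((D : ℝ) - (L q : ℝ)) := by
          calc (w p q / c q) * IM q ≤ (w p q / c q) * (((D : ℝ) - (L q : ℝ)) * c q) := by
                apply mul_le_mul_of_nonneg_left hIMq (by positivity)
            _ = w p q * ((D : ℝ) - (L q : ℝ)) := by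
                field_simp
        have h2 : (L q : ℝ) ≥ (L p : ℝ) + 1 := by
          have : L p + 1 ≤ L q := hLpq
          exact_mod_cast this
        nlinarith [hw p q]
    calc ∑ q ∈ Finset.univ.filter (fun q => L p < L q), (w p q + (w p q / c q) * IM q)
        ≤ ∑ q ∈ Finset.univ.filter (fun q => L p < L q), w p q * ((D : ℝ) - (L p : ℝ)) :=
          Finset.sum_le_sum key
      _ = (∑ q ∈ Finset.univ.filter (fun q => L p < L q), w p q) * ((D : ℝ) - (L p : ℝ)) := by
          rw [Finset.sum_mul]
      _ ≤ (∑ q, w p q) * ((D : ℝ) - (L p : ℝ)) := by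
          apply mul_le_mul_of_nonneg_right _ hDLp
          exact Finset.sum_le_sum_of_subset_of_nonneg (Finset.filter_subset _ _)
            (fun q _ _ => hw p q)
      _ ≤ c p * ((D : ℝ) - (L p : ℝ)) := mul_le_mul_of_nonneg_right (hout p) hDLp
      _ = ((D : ℝ) - (L p : ℝ)) * c p := mul_comm _ _
end

section
/- (Base case of the construction Lemma: a late leaf is critically overdue) Fix an MLAPD instance and two feasible schedules ALG and OPT, where the services of ALG occur at pairwise distinct times. Let v be a leaf of the tree (there is no node u ≠ v with par u = v), and let (S, t) be a service of ALG with v ∈ S such that v is late at time t. Then v is critically overdue at time t. -/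
open Classical

variable {V : Type} [Fintype V] [DecidableEq V] {Req : Type} [Fintype Req]

/-- A request `ρ` is pending at time `t` (with respect to the schedule `ALG`) if it has
arrived by `t` and is not satisfied by any service of `ALG` transmitted strictly
before `t`. -/
def PendingAt (node : Req → V) (arr dl : Req → ℝ) (ALG : List (Finset V × ℝ))
    (ρ : Req) (t : ℝ) : Prop :=
  arr ρ ≤ t ∧ ∀ s ∈ ALG, s.2 < t → ¬ SatisfiedBy node arr dl s.1 s.2 ρ

/-- A node `u` is late at time `t` if `d^t(u) < nos(u,t)`, i.e. there is a request `ρ`,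
pending at `t` and issued at a node of the subtree `T_u`, whose deadline is smaller
than the time of every service of `OPT` containing `u` transmitted strictly after `t`
(so in particular the minimum such deadline is). -/
def LateAt (par : V → V) (node : Req → V) (arr dl : Req → ℝ)
    (ALG OPT : List (Finset V × ℝ)) (u : V) (t : ℝ) : Prop :=
  ∃ ρ : Req, PendingAt node arr dl ALG ρ t ∧ u ∈ rootPath par (node ρ) ∧
    ∀ s ∈ OPT, u ∈ s.1 → t < s.2 → dl ρ < s.2

/-- A node `u` is critically overdue at time `t` if it is late at `t` and is not late at
the time `t'` of any service of `ALG` containing `u` with `t < t' < nos(u,t)` (i.e. `t'`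
precedes every service of `OPT` containing `u` transmitted after `t`). -/
def CriticallyOverdueAt (par : V → V) (node : Req → V) (arr dl : Req → ℝ)
    (ALG OPT : List (Finset V × ℝ)) (u : V) (t : ℝ) : Prop :=
  LateAt par node arr dl ALG OPT u t ∧
  ∀ s ∈ ALG, u ∈ s.1 → t < s.2 →
    (∀ s' ∈ OPT, u ∈ s'.1 → t < s'.2 → s.2 < s'.2) →
    ¬ LateAt par node arr dl ALG OPT u s.2

/-- **Base case of the construction Lemma (a late leaf is critically overdue)**:
for feasible schedules `ALG` (with pairwise distinct service times) and `OPT`, if `v`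
is a leaf that belongs to a service `(S, t)` of `ALG` and is late at `t`, then `v` is
critically overdue at `t`. -/
theorem late_leaf_critically_overdue
    (r : V) (par : V → V) (c : V → ℝ) (node : Req → V) (arr dl : Req → ℝ)
    (hroot : par r = r) (hreach : ∀ v : V, ∃ n : ℕ, par^[n] v = r)
    (hc : ∀ v, 0 < c v) (harr : ∀ ρ, arr ρ ≤ dl ρ) (hdl : Function.Injective dl)
    (ALG OPT : List (Finset V × ℝ))
    (hALG : Feasible r par node arr dl ALG) (hOPT : Feasible r par node arr dl OPT)
    (hdistinct : (ALG.map Prod.snd).Pairwise (· ≠ ·))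
    (v : V) (hleaf : ∀ u : V, par u = v → u = v)
    (S : Finset V) (t : ℝ) (hSt : (S, t) ∈ ALG) (hvS : v ∈ S)
    (hlate : LateAt par node arr dl ALG OPT v t) :
    CriticallyOverdueAt par node arr dl ALG OPT v t := by
  refine ⟨hlate, ?_⟩
  rintro ⟨S', t'⟩ hs hvS' htlt hbefore ⟨ρ', hpend', hrp', hOPTb⟩
  -- leaf: node ρ' = v
  have hnode : node ρ' = v := by
    simp only [rootPath, Finset.mem_filter] at hrp'
    obtain ⟨-, n, hn⟩ := hrp'
    clear hOPTb hpend'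
    induction n generalizing ρ' with
    | zero => exact hn
    | succ k ih =>
      rw [Function.iterate_succ_apply'] at hn
      exact ih ρ' (hleaf _ hn)
  -- ALG feasibility: ρ' satisfied by some ALG service
  obtain ⟨s₁, hs₁, hv₁, ha₁, hd₁⟩ := hALG.2 ρ'
  have hge : ¬ s₁.2 < t' := fun h => hpend'.2 s₁ hs₁ h ⟨hv₁, ha₁, hd₁⟩
  have hdl' : t' ≤ dl ρ' := le_trans (not_lt.mp hge) hd₁
  -- OPT feasibility
  obtain ⟨s₀, hs₀, hv₀, ha₀, hd₀⟩ := hOPT.2 ρ'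
  have hv₀' : v ∈ s₀.1 := hnode ▸ hv₀
  have hτ : s₀.2 ≤ t := by
    by_contra h
    push_neg at h
    have h2 := hbefore s₀ hs₀ hv₀' h
    exact absurd hd₀ (not_le.mpr (hOPTb s₀ hs₀ hv₀' h2))
  exact hpend'.2 (S, t) hSt htlt ⟨hnode ▸ hvS, le_trans ha₀ hτ, le_trans (le_of_lt htlt) hdl'⟩
end
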